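/- arXiv:1201.4233 — 2 statements merged into one kernel-verified Lean document; each statement's English description precedes it below -/
import Mathlib

section
/- (Choquet's lemma) Let (f_α)_{α∈A} be a family of functions on a second-countable topological space X that is locally uniformly bounded above. Then there exists a countable subfamily (f_{α_k})_{k∈ℕ} such that the regularized upper envelope of (f_{α_k}) equals the regularized upper envelope of the full family (f_α). -/
/-!
A limsup at `z` is the infimum, over basic open sets `U ∋ z`, of the supremum over `U`; so it
suffices that the subfamily has the same supremum over each of the countably many basic sets.
In a first-countable complete linear order every supremum is the limit of a sequence of its
values, so each of these countably many suprema is already attained by a countable subfamily.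
-/

open Filter Topology

theorem exists_seq_iSup_comp_eq {α ι : Type*} [CompleteLinearOrder α] [TopologicalSpace α]
    [OrderTopology α] [FirstCountableTopology α] [Nonempty ι] (g : ι → α) :
    ∃ t : ℕ → ι, ⨆ n, g (t n) = ⨆ i, g i := by
  obtain ⟨u, hmono, -, hlim, hmem⟩ :=
    (isLUB_iSup (f := g)).exists_seq_monotone_tendsto (Set.range_nonempty g)
  choose t ht using hmem
  refine ⟨t, ?_⟩
  simp only [ht]
  exact tendsto_nhds_unique (tendsto_atTop_iSup hmono) hlim

theorem exists_seq_forall_iSup_comp_eq {α ι κ : Type*} [CompleteLinearOrder α]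
    [TopologicalSpace α] [OrderTopology α] [FirstCountableTopology α] [Nonempty ι] [Countable κ]
    (g : κ → ι → α) : ∃ t : ℕ → ι, ∀ j, ⨆ n, g j (t n) = ⨆ i, g j i := by
  choose s hs using fun j => exists_seq_iSup_comp_eq (g j)
  obtain ⟨t, hst⟩ := Set.countable_iff_exists_subset_range.mp
    (Set.countable_iUnion fun j => Set.countable_range (s j))
  refine ⟨t, fun j => le_antisymm (iSup_le fun n => le_iSup (g j) (t n)) ?_⟩
  rw [← hs j]
  refine iSup_le fun m => ?_
  obtain ⟨n, hn⟩ := hst (Set.mem_iUnion.2 ⟨j, m, rfl⟩)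
  exact hn ▸ le_iSup (fun n => g j (t n)) n

theorem TopologicalSpace.IsTopologicalBasis.limsup_nhds_eq_of_biSup_eq {X α : Type*}
    [TopologicalSpace X] [CompleteLattice α] {b : Set (Set X)} (hb : IsTopologicalBasis b)
    {u v : X → α} (h : ∀ s ∈ b, ⨆ x ∈ s, u x = ⨆ x ∈ s, v x) (z : X) :
    limsup u (𝓝 z) = limsup v (𝓝 z) := by
  rw [hb.nhds_hasBasis.limsup_eq_iInf_iSup, hb.nhds_hasBasis.limsup_eq_iInf_iSup]
  exact iInf_congr fun s => iInf_congr fun hs => h s hs.1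

theorem stmt9_general {X : Type*} [TopologicalSpace X] [SecondCountableTopology X]
    {A : Type*} [Nonempty A] (f : A → X → EReal) :
    ∃ α : ℕ → A, ∀ z : X,
      limsup (fun w => ⨆ k, f (α k) w) (𝓝 z) =
        limsup (fun w => ⨆ a, f a w) (𝓝 z) := by
  obtain ⟨b, hbc, -, hb⟩ := TopologicalSpace.exists_countable_basis X
  have : Countable b := hbc.to_subtype
  obtain ⟨α, hα⟩ := exists_seq_forall_iSup_comp_eq fun (s : b) a => ⨆ w ∈ (s : Set X), f a w
  refine ⟨α, hb.limsup_nhds_eq_of_biSup_eq fun s hs => ?_⟩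
  simpa only [iSup_comm (ι := ℕ), iSup_comm (ι := A)] using hα ⟨s, hs⟩

/-- Choquet's lemma: for a family `(f_a)` of functions on a second-countable
topological space, locally uniformly bounded above, there is a countable
subfamily whose regularized upper envelope equals that of the whole family. -/
theorem stmt9 {X : Type*} [TopologicalSpace X] [SecondCountableTopology X]
    {A : Type*} [Nonempty A] (f : A → X → EReal)
    (hbdd : ∀ x : X, ∃ U ∈ 𝓝 x, ∃ M : ℝ, ∀ a, ∀ y ∈ U, f a y ≤ (M : EReal)) :
    ∃ α : ℕ → A, ∀ z : X,
      limsup (fun w => ⨆ k, f (α k) w) (𝓝 z) =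
        limsup (fun w => ⨆ a, f a w) (𝓝 z) :=
  stmt9_general f
end

section
/- Let μ_m, μ be finite positive Borel measures on a locally compact Hausdorff space Z such that μ_m → μ weakly on an open subset U ⊆ Z with μ(Z \ U) = 0 and μ_m(Z \ U) = 0 for all m, and suppose additionally limsup_m μ_m(Z) ≤ μ(Z). Then μ_m → μ weakly on all of Z. -/
/-!
Cut `h` off by an Urysohn function `f` with `tsupport f ⊆ U` and `f = 1` on a compact set
carrying all but `δ` of the mass of `μ`. The piece `h f` converges by hypothesis, and for any
finite measure `ν` the remainder `∫ h (1 - f) dν` is at most `C (ν(Z) - ∫ f dν)` when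
`C` bounds `h`. For `ν = μ` this is at most `C δ`; for `ν = μ_m` the mass bound and
`∫ f dμ_m → ∫ f dμ` make it eventually at most `3 C δ`.
-/

open MeasureTheory Filter Topology

lemma tendsto_of_forall_approx {ι : Type*} {l : Filter ι} {a : ι → ℝ} {L : ℝ}
    (h : ∀ ε > 0, ∃ b : ι → ℝ, ∃ M, Tendsto b l (𝓝 M) ∧ |M - L| ≤ ε ∧
      ∀ᶠ i in l, |a i - b i| ≤ ε) :
    Tendsto a l (𝓝 L) := by
  refine Metric.tendsto_nhds.2 fun ε hε => ?_
  obtain ⟨b, M, hbM, hML, hab⟩ := h (ε / 3) (by positivity)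
  filter_upwards [hab, Metric.tendsto_nhds.1 hbM (ε / 3) (by positivity)] with i hai hbi
  rw [Real.dist_eq] at hbi ⊢
  linarith [abs_sub_le (a i) (b i) L, abs_sub_le (b i) M L]

lemma abs_integral_sub_integral_mul_le {α : Type*} [MeasurableSpace α] {ν : Measure α}
    [IsFiniteMeasure ν] {h f : α → ℝ} {C : ℝ} (hh : Integrable h ν) (hf : Integrable f ν)
    (hhf : Integrable (fun x => h x * f x) ν) (h_nonneg : ∀ x, 0 ≤ h x) (hC : ∀ x, h x ≤ C)
    (hf01 : ∀ x, f x ∈ Set.Icc 0 1) :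
    |∫ x, h x ∂ν - ∫ x, h x * f x ∂ν| ≤ C * (ν.real Set.univ - ∫ x, f x ∂ν) := by
  have hCf : Integrable (fun x => C - C * f x) ν := (integrable_const C).sub (hf.const_mul C)
  rw [← integral_sub hh hhf, abs_of_nonneg (integral_nonneg fun x => ?_)]
  · calc ∫ x, (h x - h x * f x) ∂ν ≤ ∫ x, (C - C * f x) ∂ν :=
          integral_mono (hh.sub hhf) hCf fun x => by nlinarith [hC x, (hf01 x).2]
      _ = C * (ν.real Set.univ - ∫ x, f x ∂ν) := by
          rw [integral_sub (integrable_const C) (hf.const_mul C), integral_const,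
            integral_const_mul, smul_eq_mul]
          ring
  · show 0 ≤ h x - h x * f x
    nlinarith [h_nonneg x, (hf01 x).2]

lemma exists_cutoff_lt_integral {Z : Type*} [TopologicalSpace Z] [LocallyCompactSpace Z]
    [R1Space Z] [MeasurableSpace Z] [BorelSpace Z] (μ : Measure Z) [IsFiniteMeasure μ]
    [μ.InnerRegularCompactLTTop] {U : Set Z} (hU : IsOpen U) (hμ : μ Uᶜ = 0)
    {δ : ℝ} (hδ : 0 < δ) :
    ∃ f : C(Z, ℝ), HasCompactSupport f ∧ tsupport f ⊆ U ∧ (∀ z, f z ∈ Set.Icc 0 1) ∧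
      μ.real Set.univ - δ < ∫ z, f z ∂μ := by
  obtain ⟨K, hKU, hK, hK_closed, hμK⟩ := hU.measurableSet.exists_isCompact_isClosed_sdiff_lt
    (measure_ne_top μ U) (ENNReal.ofReal_pos.2 hδ).ne'
  obtain ⟨f, hf1, hf_compact, hfU, hf01⟩ :=
    exists_continuousMap_one_of_isCompact_subset_isOpen hK hU hKU
  refine ⟨f, hf_compact, hfU, hf01, ?_⟩
  have hKf : μ.real K ≤ ∫ z, f z ∂μ := by
    rw [← integral_indicator_one hK_closed.measurableSet]
    refine integral_mono ((integrable_const 1).indicator hK_closed.measurableSet)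
      (f.continuous.integrable_of_hasCompactSupport hf_compact) fun z => ?_
    by_cases hz : z ∈ K
    · simp [hz, hf1 hz]
    · simp [hz, (hf01 z).1]
  have hUK : μ.real U - μ.real K < δ :=
    (le_measureReal_sdiff).trans_lt (ENNReal.toReal_lt_of_lt_ofReal hμK)
  rw [measureReal_congr (ae_eq_univ.2 hμ).symm]
  linarith

lemma eventually_measureReal_univ_lt {α ι : Type*} [MeasurableSpace α] {l : Filter ι}
    {μs : ι → Measure α} {μ : Measure α} [IsFiniteMeasure μ]
    (hmass : limsup (fun i => μs i Set.univ) l ≤ μ Set.univ) {δ : ℝ} (hδ : 0 < δ) :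
    ∀ᶠ i in l, (μs i).real Set.univ < μ.real Set.univ + δ := by
  have hlt : limsup (fun i => μs i Set.univ) l < ENNReal.ofReal (μ.real Set.univ + δ) :=
    hmass.trans_lt <| (ENNReal.lt_ofReal_iff_toReal_lt (measure_ne_top μ _)).2 (by
      rw [← Measure.real]; linarith)
  filter_upwards [eventually_lt_of_limsup_lt hlt] with i hi
  exact ENNReal.toReal_lt_of_lt_ofReal hi

theorem stmt18_general {Z : Type*} [TopologicalSpace Z] [LocallyCompactSpace Z]
    [T2Space Z] [SecondCountableTopology Z] [MeasurableSpace Z] [BorelSpace Z]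
    (μm : ℕ → Measure Z) (μ : Measure Z)
    [∀ m, IsFiniteMeasure (μm m)] [IsFiniteMeasure μ]
    (U : Set Z) (hU : IsOpen U)
    (hμ : μ Uᶜ = 0)
    (hweakU : ∀ h : Z → ℝ, Continuous h → HasCompactSupport h → (∀ z, 0 ≤ h z) →
      tsupport h ⊆ U →
      Tendsto (fun m => ∫ z, h z ∂(μm m)) atTop (𝓝 (∫ z, h z ∂μ)))
    (hmass : limsup (fun m => μm m Set.univ) atTop ≤ μ Set.univ) :
    ∀ h : Z → ℝ, Continuous h → HasCompactSupport h → (∀ z, 0 ≤ h z) →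
      Tendsto (fun m => ∫ z, h z ∂(μm m)) atTop (𝓝 (∫ z, h z ∂μ)) := by
  intro h hcont hsupp h_nonneg
  obtain ⟨C, hC_pos, hC⟩ : ∃ C > 0, ∀ z, h z ≤ C := by
    obtain ⟨C, hC⟩ := hcont.bddAbove_range_of_hasCompactSupport hsupp
    exact ⟨max C 1, by positivity, fun z => (hC ⟨z, rfl⟩).trans (le_max_left _ _)⟩
  refine tendsto_of_forall_approx fun ε hε => ?_
  have hδ : 0 < ε / (3 * C) := by positivity
  obtain ⟨f, hf_compact, hfU, hf01, hfμ⟩ := exists_cutoff_lt_integral μ hU hμ hδ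
  have tail (ν : Measure Z) [IsFiniteMeasure ν] :
      |∫ z, h z ∂ν - ∫ z, h z * f z ∂ν| ≤ C * (ν.real Set.univ - ∫ z, f z ∂ν) :=
    abs_integral_sub_integral_mul_le (hcont.integrable_of_hasCompactSupport hsupp)
      (f.continuous.integrable_of_hasCompactSupport hf_compact)
      ((hcont.mul f.continuous).integrable_of_hasCompactSupport hsupp.mul_right)
      h_nonneg hC hf01
  refine ⟨_, _, hweakU _ (hcont.mul f.continuous) hsupp.mul_right
    (fun z => mul_nonneg (h_nonneg z) (hf01 z).1) (tsupport_mul_subset_right.trans hfU), ?_, ?_⟩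
  · calc _ ≤ C * (μ.real Set.univ - ∫ z, f z ∂μ) := abs_sub_comm _ (∫ z, h z ∂μ) ▸ tail μ
      _ ≤ C * (3 * (ε / (3 * C))) := by gcongr; linarith
      _ = ε := by field_simp
  · have hfT := hweakU f f.continuous hf_compact (fun z => (hf01 z).1) hfU
    filter_upwards [eventually_measureReal_univ_lt hmass hδ,
      hfT.eventually_const_lt (sub_lt_self _ hδ)] with m hm hfm
    calc _ ≤ C * ((μm m).real Set.univ - ∫ z, f z ∂μm m) := tail (μm m)
      _ ≤ C * (3 * (ε / (3 * C))) := by gcongr; linarith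
      _ = ε := by field_simp

/-- Mass comparison upgrades weak convergence off a negligible closed complement to
global weak convergence: if the finite measures `μ_m`, `μ` give no mass to `Z \ U`,
`μ_m → μ` weakly on `U` (tested against nonnegative continuous compactly supported
functions supported in `U`), and `limsup μ_m(Z) ≤ μ(Z)`, then `μ_m → μ` weakly on `Z`. -/
theorem stmt18 {Z : Type*} [TopologicalSpace Z] [LocallyCompactSpace Z]
    [T2Space Z] [SecondCountableTopology Z] [MeasurableSpace Z] [BorelSpace Z]
    (μm : ℕ → Measure Z) (μ : Measure Z)
    [∀ m, IsFiniteMeasure (μm m)] [IsFiniteMeasure μ]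
    (U : Set Z) (hU : IsOpen U)
    (hμ : μ Uᶜ = 0) (hμm : ∀ m, μm m Uᶜ = 0)
    (hweakU : ∀ h : Z → ℝ, Continuous h → HasCompactSupport h → (∀ z, 0 ≤ h z) →
      tsupport h ⊆ U →
      Tendsto (fun m => ∫ z, h z ∂(μm m)) atTop (𝓝 (∫ z, h z ∂μ)))
    (hmass : limsup (fun m => μm m Set.univ) atTop ≤ μ Set.univ) :
    ∀ h : Z → ℝ, Continuous h → HasCompactSupport h → (∀ z, 0 ≤ h z) →
      Tendsto (fun m => ∫ z, h z ∂(μm m)) atTop (𝓝 (∫ z, h z ∂μ)) :=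
  stmt18_general μm μ U hU hμ hweakU hmass
end
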